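/- Under the distributed two-time-scale setup with δ ∈ (σ,1), σ + 2α0 ≤ 1, and K* a positive integer with K* ≥ (2α0/(δ−σ))^{3/2}: for every k ≥ K*, ‖X̂_k‖ + ‖Ŷ_k‖ ≤ 2·√N·(R+C)·α0·(3 + 1/(1−δ))·(K*)^{1/3}. -/

import Mathlib

/-!
With `P = I - (1/N) 𝟙𝟙ᵀ` the consensus errors are `X̂ₖ = P Xₖ` and `Ŷₖ = P Yₖ`. Since `P` commutes
with the doubly stochastic `W`, `W` contracts the mean-zero columns of `X̂ₖ` by `σ`, and `P` and the
`Aᵢⱼ` do not expand the Frobenius norm,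
`‖X̂ₖ₊₁‖ ≤ σ ‖X̂ₖ‖ + αₖ (‖X̂ₖ‖ + ‖Ŷₖ‖ + c)` with `c = √N (R + C)`, and likewise for `Ŷ` with
`βₖ ≤ αₖ`. Hence `zₖ = ‖X̂ₖ‖ + ‖Ŷₖ‖` obeys `zₖ₊₁ ≤ (σ + 2αₖ) zₖ + 2αₖ c`. Before `K*` the factor
is at most `1`, so `z_{K*} ≤ 2c ∑ⱼ αⱼ ≤ 6c α₀ K*^(1/3)`; from `K*` on it is at most `δ`, and the
bound `M` of the claim satisfies `2α₀ c ≤ (1 - δ) M`, so `z` never exceeds `M`.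
-/

/-- The Euclidean norm of a vector (represented as a function into `ℝ`). -/
noncomputable def eucEnorm {n : ℕ} (v : Fin n → ℝ) : ℝ :=
  Real.sqrt (∑ i, v i ^ 2)

/-- The Frobenius norm of an `N×d` real matrix. -/
noncomputable def fnorm {N d : ℕ} (M : Matrix (Fin N) (Fin d) ℝ) : ℝ :=
  Real.sqrt (∑ i, ∑ j, M i j ^ 2)

open Finset Matrix
open scoped Matrix.Norms.Frobenius

lemma eucEnorm_sq {n : ℕ} (v : Fin n → ℝ) : eucEnorm v ^ 2 = ∑ i, v i ^ 2 :=
  Real.sq_sqrt (sum_nonneg fun _ _ => sq_nonneg _)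

lemma frobenius_norm_sq_eq_sum_sq {m n : Type*} [Fintype m] [Fintype n] (M : Matrix m n ℝ) :
    ‖M‖ ^ 2 = ∑ i, ∑ j, M i j ^ 2 := by
  rw [frobenius_norm_def, ← Real.sqrt_eq_rpow, Real.sq_sqrt (by positivity)]
  simp only [Real.rpow_two, Real.norm_eq_abs, sq_abs]

lemma fnorm_eq_norm {N d : ℕ} (M : Matrix (Fin N) (Fin d) ℝ) : fnorm M = ‖M‖ := by
  rw [fnorm, ← frobenius_norm_sq_eq_sum_sq, Real.sqrt_sq (norm_nonneg M)]

lemma frobenius_norm_sq_eq_sum_eucEnorm_sq {m n : ℕ} (M : Matrix (Fin m) (Fin n) ℝ) :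
    ‖M‖ ^ 2 = ∑ i, eucEnorm (M i) ^ 2 := by
  simp only [frobenius_norm_sq_eq_sum_sq, eucEnorm_sq]

lemma frobenius_norm_le_sqrt_mul_of_rows_le {m n : ℕ} (M : Matrix (Fin m) (Fin n) ℝ) {r : ℝ}
    (hr : 0 ≤ r) (hM : ∀ i, eucEnorm (M i) ≤ r) : ‖M‖ ≤ Real.sqrt m * r := by
  have hsq : ‖M‖ ^ 2 ≤ (Real.sqrt m * r) ^ 2 := by
    rw [frobenius_norm_sq_eq_sum_eucEnorm_sq, mul_pow, Real.sq_sqrt m.cast_nonneg]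
    calc ∑ i, eucEnorm (M i) ^ 2 ≤ ∑ _i : Fin m, r ^ 2 :=
          sum_le_sum fun i _ => pow_le_pow_left₀ (Real.sqrt_nonneg _) (hM i) 2
      _ = m * r ^ 2 := by simp
  exact le_of_sq_le_sq (by simpa using hsq) (by positivity)

lemma frobenius_norm_mul_transpose_le {m n k : ℕ} (p : (Fin n → ℝ) → Prop) {c : ℝ}
    (hc : 0 ≤ c) (A : Matrix (Fin k) (Fin n) ℝ)
    (hA : ∀ v, p v → eucEnorm (A *ᵥ v) ≤ c * eucEnorm v)
    (M : Matrix (Fin m) (Fin n) ℝ) (hM : ∀ i, p (M i)) : ‖M * Aᵀ‖ ≤ c * ‖M‖ := by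
  have hsq : ‖M * Aᵀ‖ ^ 2 ≤ (c * ‖M‖) ^ 2 := by
    rw [mul_pow, frobenius_norm_sq_eq_sum_eucEnorm_sq, frobenius_norm_sq_eq_sum_eucEnorm_sq,
      mul_sum]
    refine sum_le_sum fun i _ => ?_
    rw [mul_apply_eq_vecMul, vecMul_transpose, ← mul_pow]
    exact pow_le_pow_left₀ (Real.sqrt_nonneg _) (hA _ (hM i)) 2
  exact le_of_sq_le_sq (by simpa using hsq) (by positivity)

lemma frobenius_norm_mul_le_of_sum_eq_zero {m n : ℕ} {σ : ℝ} (hσ : 0 ≤ σ)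
    (W : Matrix (Fin m) (Fin m) ℝ)
    (hW : ∀ v : Fin m → ℝ, ∑ i, v i = 0 → eucEnorm (W *ᵥ v) ≤ σ * eucEnorm v)
    (M : Matrix (Fin m) (Fin n) ℝ) (hM : ∀ j, ∑ i, M i j = 0) : ‖W * M‖ ≤ σ * ‖M‖ := by
  rw [← frobenius_norm_transpose, transpose_mul, ← frobenius_norm_transpose M]
  exact frobenius_norm_mul_transpose_le (fun v => ∑ i, v i = 0) hσ W hW Mᵀ hM

noncomputable def centeringMatrix (N : ℕ) : Matrix (Fin N) (Fin N) ℝ :=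
  1 - (N : ℝ)⁻¹ • of fun _ _ => 1

lemma centeringMatrix_mul_apply {N d : ℕ} (M : Matrix (Fin N) (Fin d) ℝ) (i : Fin N)
    (j : Fin d) : (centeringMatrix N * M) i j = M i j - (N : ℝ)⁻¹ * ∑ l, M l j := by
  rw [centeringMatrix, Matrix.sub_mul, Matrix.one_mul, Matrix.smul_mul]
  simp [mul_apply, mul_sum]

lemma sum_centeringMatrix_mul_apply {N d : ℕ} (M : Matrix (Fin N) (Fin d) ℝ) (j : Fin d) :
    ∑ i, (centeringMatrix N * M) i j = 0 := by
  rcases Nat.eq_zero_or_pos N with rfl | hN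
  · simp
  simp only [centeringMatrix_mul_apply, sum_sub_distrib, sum_const, card_univ, Fintype.card_fin,
    nsmul_eq_mul]
  field_simp
  ring

lemma centeringMatrix_mul_comm {N : ℕ} (W : Matrix (Fin N) (Fin N) ℝ)
    (hrow : ∀ i, ∑ j, W i j = 1) (hcol : ∀ j, ∑ i, W i j = 1) :
    centeringMatrix N * W = W * centeringMatrix N := by
  rw [centeringMatrix, Matrix.sub_mul, Matrix.mul_sub, Matrix.one_mul, Matrix.mul_one,
    Matrix.smul_mul, Matrix.mul_smul]
  congr 2
  ext i j
  simp [mul_apply, hrow, hcol]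

lemma sum_sq_sub_mean_le {N : ℕ} (a : Fin N → ℝ) :
    ∑ i, (a i - (N : ℝ)⁻¹ * ∑ l, a l) ^ 2 ≤ ∑ i, a i ^ 2 := by
  rcases Nat.eq_zero_or_pos N with rfl | hN
  · simp
  set m := (N : ℝ)⁻¹ * ∑ l, a l
  have hsum : ∑ l, a l = N * m := by simp only [m]; field_simp
  have hexpand : ∑ i, (a i - m) ^ 2 = ∑ i, a i ^ 2 - N * m ^ 2 := by
    simp only [sub_sq, sum_add_distrib, sum_sub_distrib, ← sum_mul, ← mul_sum, hsum, sum_const,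
      card_univ, Fintype.card_fin, nsmul_eq_mul]
    ring
  rw [hexpand]
  nlinarith [sq_nonneg m, (Nat.cast_pos (α := ℝ)).mpr hN]

lemma frobenius_norm_centeringMatrix_mul_le {N d : ℕ} (M : Matrix (Fin N) (Fin d) ℝ) :
    ‖centeringMatrix N * M‖ ≤ ‖M‖ := by
  refine le_of_sq_le_sq ?_ (norm_nonneg M)
  rw [frobenius_norm_sq_eq_sum_sq, frobenius_norm_sq_eq_sum_sq]
  conv_lhs => rw [sum_comm]
  conv_rhs => rw [sum_comm]
  simp only [centeringMatrix_mul_apply]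
  exact sum_le_sum fun j _ => sum_sq_sub_mean_le fun i => M i j

lemma frobenius_norm_centeringMatrix_mul_update_le {N d : ℕ} {σ a : ℝ} (hσ : 0 ≤ σ)
    (ha : 0 ≤ a) (W : Matrix (Fin N) (Fin N) ℝ)
    (hrow : ∀ i, ∑ j, W i j = 1) (hcol : ∀ j, ∑ i, W i j = 1)
    (hW : ∀ v : Fin N → ℝ, ∑ i, v i = 0 → eucEnorm (W *ᵥ v) ≤ σ * eucEnorm v)
    (A₁ A₂ : Matrix (Fin d) (Fin d) ℝ)
    (hA₁ : ∀ v, eucEnorm (A₁ *ᵥ v) ≤ eucEnorm v) (hA₂ : ∀ v, eucEnorm (A₂ *ᵥ v) ≤ eucEnorm v)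
    (U X Y B E : Matrix (Fin N) (Fin d) ℝ) :
    ‖centeringMatrix N * (W * U - a • (X * A₁ᵀ + Y * A₂ᵀ - B + E))‖ ≤
      σ * ‖centeringMatrix N * U‖ +
        a * (‖centeringMatrix N * X‖ + ‖centeringMatrix N * Y‖ + ‖B‖ + ‖E‖) := by
  set P := centeringMatrix N
  have hrewrite : P * (W * U - a • (X * A₁ᵀ + Y * A₂ᵀ - B + E)) =
      W * (P * U) - a • ((P * X) * A₁ᵀ + (P * Y) * A₂ᵀ - P * B + P * E) := by
    simp only [Matrix.mul_sub, Matrix.mul_smul, Matrix.mul_add, ← Matrix.mul_assoc,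
      centeringMatrix_mul_comm W hrow hcol, P]
  have hop : ∀ (A : Matrix (Fin d) (Fin d) ℝ), (∀ v, eucEnorm (A *ᵥ v) ≤ eucEnorm v) →
      ∀ M : Matrix (Fin N) (Fin d) ℝ, ‖M * Aᵀ‖ ≤ ‖M‖ := fun A hA M => by
    simpa using frobenius_norm_mul_transpose_le (fun _ => True) zero_le_one A
      (by simpa using hA) M (fun _ => trivial)
  have hWU : ‖W * (P * U)‖ ≤ σ * ‖P * U‖ :=
    frobenius_norm_mul_le_of_sum_eq_zero hσ W hW (P * U) (sum_centeringMatrix_mul_apply U)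
  have hforce : ‖(P * X) * A₁ᵀ + (P * Y) * A₂ᵀ - P * B + P * E‖ ≤
      ‖P * X‖ + ‖P * Y‖ + ‖B‖ + ‖E‖ := by
    linarith [hop A₁ hA₁ (P * X), hop A₂ hA₂ (P * Y), frobenius_norm_centeringMatrix_mul_le B,
      frobenius_norm_centeringMatrix_mul_le E,
      norm_add_le ((P * X) * A₁ᵀ + (P * Y) * A₂ᵀ - P * B) (P * E),
      norm_sub_le ((P * X) * A₁ᵀ + (P * Y) * A₂ᵀ) (P * B),
      norm_add_le ((P * X) * A₁ᵀ) ((P * Y) * A₂ᵀ)]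
  rw [hrewrite]
  calc _ ≤ ‖W * (P * U)‖ + ‖a • ((P * X) * A₁ᵀ + (P * Y) * A₂ᵀ - P * B + P * E)‖ :=
        norm_sub_le _ _
    _ ≤ _ := by
      rw [norm_smul, Real.norm_of_nonneg ha]
      gcongr

lemma of_eq_mul_sub_smul {N d : ℕ} (W : Matrix (Fin N) (Fin N) ℝ)
    (A₁ A₂ : Matrix (Fin d) (Fin d) ℝ) (a : ℝ) (u v w b e u' : Fin N → Fin d → ℝ)
    (h : ∀ i, u' i = ∑ j, W i j • u j - a • (A₁ *ᵥ v i + A₂ *ᵥ w i - b i + e i)) :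
    of u' = W * of u - a • (of v * A₁ᵀ + of w * A₂ᵀ - of b + of e) := by
  ext i j
  simp [h, mul_apply, mulVec, dotProduct, mul_comm]

lemma frobenius_norm_centeringMatrix_mul_of_update_le {N d : ℕ} {σ a R C : ℝ} (hσ : 0 ≤ σ)
    (ha : 0 ≤ a) (hR : 0 ≤ R) (hC : 0 ≤ C) (W : Matrix (Fin N) (Fin N) ℝ)
    (hrow : ∀ i, ∑ j, W i j = 1) (hcol : ∀ j, ∑ i, W i j = 1)
    (hW : ∀ v : Fin N → ℝ, ∑ i, v i = 0 → eucEnorm (W *ᵥ v) ≤ σ * eucEnorm v)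
    (A₁ A₂ : Matrix (Fin d) (Fin d) ℝ)
    (hA₁ : ∀ v, eucEnorm (A₁ *ᵥ v) ≤ eucEnorm v) (hA₂ : ∀ v, eucEnorm (A₂ *ᵥ v) ≤ eucEnorm v)
    (u v w b e u' : Fin N → Fin d → ℝ)
    (hb : ∀ i, eucEnorm (b i) ≤ R) (he : ∀ i, eucEnorm (e i) ≤ C)
    (h : ∀ i, u' i = ∑ j, W i j • u j - a • (A₁ *ᵥ v i + A₂ *ᵥ w i - b i + e i)) :
    ‖centeringMatrix N * of u'‖ ≤ σ * ‖centeringMatrix N * of u‖ +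
      a * (‖centeringMatrix N * of v‖ + ‖centeringMatrix N * of w‖ + Real.sqrt N * (R + C)) := by
  have hBE : ‖of b‖ + ‖of e‖ ≤ Real.sqrt N * (R + C) := by
    rw [mul_add]
    exact add_le_add (frobenius_norm_le_sqrt_mul_of_rows_le (of b) hR hb)
      (frobenius_norm_le_sqrt_mul_of_rows_le (of e) hC he)
  rw [of_eq_mul_sub_smul W A₁ A₂ a u v w b e u' h]
  refine (frobenius_norm_centeringMatrix_mul_update_le hσ ha W hrow hcol hW A₁ A₂ hA₁ hA₂
    _ _ _ _ _).trans ?_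
  gcongr σ * _ + a * ?_
  linarith

lemma le_add_sum_of_le_mul_add {z q e : ℕ → ℝ} (hz : ∀ n, 0 ≤ z n) (hq : ∀ n, q n ≤ 1)
    (h : ∀ n, z (n + 1) ≤ q n * z n + e n) (n : ℕ) : z n ≤ z 0 + ∑ j ∈ range n, e j := by
  induction n with
  | zero => simp
  | succ n ih =>
    rw [sum_range_succ]
    linarith [h n, mul_le_of_le_one_left (hz n) (hq n)]

lemma le_of_le_mul_add_of_ge {z q e : ℕ → ℝ} {K : ℕ} {δ M : ℝ} (hM : 0 ≤ M) (hzK : z K ≤ M)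
    (hq : ∀ n, K ≤ n → 0 ≤ q n ∧ q n ≤ δ) (he : ∀ n, K ≤ n → e n ≤ (1 - δ) * M)
    (h : ∀ n, K ≤ n → z (n + 1) ≤ q n * z n + e n) {n : ℕ} (hn : K ≤ n) : z n ≤ M := by
  induction n, hn using Nat.le_induction with
  | base => exact hzK
  | succ n hn ih =>
    obtain ⟨hq0, hqδ⟩ := hq n hn
    have : q n * z n ≤ δ * M :=
      (mul_le_mul_of_nonneg_left ih hq0).trans (mul_le_mul_of_nonneg_right hqδ hM)
    linarith [h n hn, he n hn]

/-- Comparison with `∫₀ᴷ t^(-2/3) dt = 3 K^(1/3)`, step by step: with `a = K^(1/3)` and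
`b = (K+1)^(1/3)`, `1 = b³ - a³ ≤ 3 b² (b - a)`. -/
lemma sum_range_one_div_rpow_two_thirds_le (K : ℕ) :
    ∑ j ∈ range K, 1 / ((j : ℝ) + 1) ^ ((2 : ℝ) / 3) ≤ 3 * (K : ℝ) ^ ((1 : ℝ) / 3) := by
  induction K with
  | zero => simp
  | succ K ih =>
    rw [sum_range_succ]
    push_cast
    set a := (K : ℝ) ^ ((1 : ℝ) / 3)
    set b := ((K : ℝ) + 1) ^ ((1 : ℝ) / 3)
    have hK : (0 : ℝ) ≤ K := K.cast_nonneg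
    have hb : 0 < b := Real.rpow_pos_of_pos (by linarith) _
    have hab : a ≤ b := Real.rpow_le_rpow hK (by linarith) (by norm_num)
    have hcube : ∀ x : ℝ, 0 ≤ x → (x ^ ((1 : ℝ) / 3)) ^ 3 = x := fun x hx => by
      rw [← Real.rpow_natCast, ← Real.rpow_mul hx]
      norm_num
    have ha3 : a ^ 3 = K := hcube K hK
    have hb3 : b ^ 3 = K + 1 := hcube (K + 1) (by linarith)
    have hb2 : ((K : ℝ) + 1) ^ ((2 : ℝ) / 3) = b ^ 2 := by
      rw [← Real.rpow_natCast, ← Real.rpow_mul (by linarith)]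
      norm_num
    have hstep : 1 / b ^ 2 ≤ 3 * (b - a) := by
      rw [div_le_iff₀ (by positivity)]
      nlinarith [mul_nonneg (mul_nonneg (sub_nonneg.mpr hab) (sub_nonneg.mpr hab))
        (by linarith [Real.rpow_nonneg hK ((1 : ℝ) / 3)] : (0 : ℝ) ≤ 2 * b + a)]
    rw [hb2]
    linarith

lemma div_rpow_two_thirds_le_of_le {a ε : ℝ} (ha : 0 ≤ a) (hε : 0 < ε) {K k : ℕ}
    (hK : (a / ε) ^ ((3 : ℝ) / 2) ≤ K) (hk : K ≤ k) :
    a / ((k : ℝ) + 1) ^ ((2 : ℝ) / 3) ≤ ε := by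
  have haε : 0 ≤ a / ε := div_nonneg ha hε.le
  have hle : a / ε ≤ ((k : ℝ) + 1) ^ ((2 : ℝ) / 3) :=
    calc a / ε = ((a / ε) ^ ((3 : ℝ) / 2)) ^ ((2 : ℝ) / 3) := by
          rw [← Real.rpow_mul haε]; norm_num
      _ ≤ ((k : ℝ) + 1) ^ ((2 : ℝ) / 3) := by
          gcongr
          linarith [(Nat.cast_le (α := ℝ)).mpr hk]
  rw [div_le_iff₀ hε] at hle
  rw [div_le_iff₀ (by positivity)]
  linarith

lemma div_add_one_le_div_rpow_two_thirds {a b : ℝ} (hb : 0 ≤ b) (hba : b ≤ a) (n : ℕ) :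
    b / ((n : ℝ) + 1) ≤ a / ((n : ℝ) + 1) ^ ((2 : ℝ) / 3) :=
  div_le_div₀ (hb.trans hba) hba (by positivity)
    (Real.rpow_le_self_of_one_le (by simp) (by norm_num))

lemma le_of_le_stepsize_recursion {z α : ℕ → ℝ} {σ δ α0 c : ℝ} {K k : ℕ}
    (hz : ∀ n, 0 ≤ z n) (hz0 : z 0 = 0) (hc : 0 ≤ c) (hα0 : 0 ≤ α0)
    (hα : ∀ n, α n = α0 / ((n : ℝ) + 1) ^ ((2 : ℝ) / 3)) (hσ : 0 ≤ σ) (hσα : σ + 2 * α0 ≤ 1)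
    (hδσ : σ < δ) (hδ1 : δ < 1) (hK : 1 ≤ K)
    (hKα : (2 * α0 / (δ - σ)) ^ ((3 : ℝ) / 2) ≤ K) (hk : K ≤ k)
    (hstep : ∀ n, z (n + 1) ≤ (σ + 2 * α n) * z n + 2 * α n * c) :
    z k ≤ 2 * c * α0 * (3 + 1 / (1 - δ)) * (K : ℝ) ^ ((1 : ℝ) / 3) := by
  have hα_nonneg n : 0 ≤ α n := by rw [hα]; positivity
  have hα_le n : α n ≤ α0 := by
    rw [hα]; exact div_le_self hα0 (Real.one_le_rpow (by simp) (by norm_num))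
  have hzK : z K ≤ 2 * c * α0 * (3 * (K : ℝ) ^ ((1 : ℝ) / 3)) :=
    calc z K ≤ z 0 + ∑ j ∈ range K, 2 * α j * c :=
          le_add_sum_of_le_mul_add hz (fun n => by linarith [hα_le n]) hstep K
      _ = 2 * c * α0 * ∑ j ∈ range K, 1 / ((j : ℝ) + 1) ^ ((2 : ℝ) / 3) := by
          rw [hz0, zero_add, mul_sum]
          exact sum_congr rfl fun j _ => by rw [hα]; ring
      _ ≤ _ := by gcongr; exact sum_range_one_div_rpow_two_thirds_le K
  have hcontract n (hn : K ≤ n) : σ + 2 * α n ≤ δ := by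
    have := div_rpow_two_thirds_le_of_le (by positivity : 0 ≤ 2 * α0) (sub_pos.2 hδσ) hKα hn
    rw [hα, ← mul_div_assoc]
    linarith
  set t := (K : ℝ) ^ ((1 : ℝ) / 3)
  have ht : 1 ≤ t := Real.one_le_rpow (by exact_mod_cast hK) (by norm_num)
  have hδ : 0 < 1 - δ := sub_pos.2 hδ1
  have hM : 2 * c * α0 * (3 + 1 / (1 - δ)) * t =
      2 * c * α0 * (3 * t) + 2 * c * α0 * t / (1 - δ) := by ring
  refine le_of_le_mul_add_of_ge (by positivity) ?_
    (fun n hn => ⟨by linarith [hα_nonneg n], hcontract n hn⟩) (fun n _ => ?_)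
    (fun n _ => hstep n) hk
  · have : 0 ≤ 2 * c * α0 * t / (1 - δ) := by positivity
    linarith
  · have hlevel : (1 - δ) * (2 * c * α0 * (3 + 1 / (1 - δ)) * t) =
        2 * c * α0 * t + 2 * c * α0 * (3 * (1 - δ) * t) := by field_simp; ring
    have := mul_le_mul_of_nonneg_right (hα_le n) (by positivity : 0 ≤ 2 * c)
    have := le_mul_of_one_le_right (by positivity : 0 ≤ 2 * c * α0) ht
    have : 0 ≤ 2 * c * α0 * (3 * (1 - δ) * t) := by positivity
    linarith

lemma fnorm_sub_mean_eq {N d : ℕ} (u : Fin N → Fin d → ℝ) :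
    fnorm (of fun i j => u i j - ((1 / (N : ℝ)) • ∑ l, u l) j) = ‖centeringMatrix N * of u‖ := by
  rw [fnorm_eq_norm]
  congr 1
  ext i j
  simp [centeringMatrix_mul_apply]

theorem stmt_9_general
    {N d : ℕ} (R C : ℝ) (hR : 0 ≤ R) (hC : 0 ≤ C)
    (W V : Matrix (Fin N) (Fin N) ℝ)
    (hWrow : ∀ i, ∑ j, W i j = 1)
    (hWcol : ∀ j, ∑ i, W i j = 1)
    (hVrow : ∀ i, ∑ j, V i j = 1)
    (hVcol : ∀ j, ∑ i, V i j = 1)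
    (σ : ℝ) (hσ0 : 0 < σ)
    (hWcontract : ∀ v : Fin N → ℝ, (∑ i, v i = 0) → eucEnorm (W.mulVec v) ≤ σ * eucEnorm v)
    (hVcontract : ∀ v : Fin N → ℝ, (∑ i, v i = 0) → eucEnorm (V.mulVec v) ≤ σ * eucEnorm v)
    (A11 A12 A21 A22 : Matrix (Fin d) (Fin d) ℝ)
    (hA11 : ∀ v, eucEnorm (A11.mulVec v) ≤ eucEnorm v)
    (hA12 : ∀ v, eucEnorm (A12.mulVec v) ≤ eucEnorm v)
    (hA21 : ∀ v, eucEnorm (A21.mulVec v) ≤ eucEnorm v)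
    (hA22 : ∀ v, eucEnorm (A22.mulVec v) ≤ eucEnorm v)
    (b1 b2 : Fin N → Fin d → ℝ)
    (hb1 : ∀ i, eucEnorm (b1 i) ≤ R) (hb2 : ∀ i, eucEnorm (b2 i) ≤ R)
    (ξ ψ : ℕ → Fin N → Fin d → ℝ)
    (hξ : ∀ k i, eucEnorm (ξ k i) ≤ C) (hψ : ∀ k i, eucEnorm (ψ k i) ≤ C)
    (α0 β0 : ℝ) (hβ0 : 0 < β0) (hβα : β0 ≤ α0)
    (α β : ℕ → ℝ)
    (hα : ∀ k, α k = α0 / ((k : ℝ) + 1) ^ ((2 : ℝ) / 3))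
    (hβ : ∀ k, β k = β0 / ((k : ℝ) + 1))
    (x y : ℕ → Fin N → Fin d → ℝ)
    (hx0 : ∀ i, x 0 i = 0) (hy0 : ∀ i, y 0 i = 0)
    (hxrec : ∀ k i, x (k + 1) i =
      (∑ j, W i j • x k j) -
        α k • (A11.mulVec (x k i) + A12.mulVec (y k i) - b1 i + ξ k i))
    (hyrec : ∀ k i, y (k + 1) i =
      (∑ j, V i j • y k j) -
        β k • (A21.mulVec (x k i) + A22.mulVec (y k i) - b2 i + ψ k i))
    (xbar ybar : ℕ → Fin d → ℝ)
    (hxbar : ∀ k, xbar k = (1 / (N : ℝ)) • ∑ i, x k i)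
    (hybar : ∀ k, ybar k = (1 / (N : ℝ)) • ∑ i, y k i)
    (Xhat Yhat : ℕ → Matrix (Fin N) (Fin d) ℝ)
    (hXhat : ∀ k, Xhat k = Matrix.of fun i j => x k i j - xbar k j)
    (hYhat : ∀ k, Yhat k = Matrix.of fun i j => y k i j - ybar k j)
    (δ : ℝ) (hδσ : σ < δ) (hδ1 : δ < 1) (hσα : σ + 2 * α0 ≤ 1)
    (Kstar : ℕ) (hKpos : 1 ≤ Kstar)
    (hKstar : (2 * α0 / (δ - σ)) ^ ((3 : ℝ) / 2) ≤ (Kstar : ℝ))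
    (k : ℕ) (hk : Kstar ≤ k) :
    fnorm (Xhat k) + fnorm (Yhat k) ≤
      2 * Real.sqrt N * (R + C) * α0 * (3 + 1 / (1 - δ)) * (Kstar : ℝ) ^ ((1 : ℝ) / 3) := by
  have hβ_nonneg k : 0 ≤ β k := by rw [hβ]; positivity
  have hβ_le k : β k ≤ α k := by
    rw [hα, hβ]; exact div_add_one_le_div_rpow_two_thirds hβ0.le hβα k
  have hα_nonneg k : 0 ≤ α k := (hβ_nonneg k).trans (hβ_le k)
  set P := centeringMatrix N
  set c := Real.sqrt N * (R + C)
  set z : ℕ → ℝ := fun n => ‖P * of (x n)‖ + ‖P * of (y n)‖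
  have hz0 : z 0 = 0 := by simp [z, show x 0 = 0 from funext hx0, show y 0 = 0 from funext hy0]
  have hstep n : z (n + 1) ≤ (σ + 2 * α n) * z n + 2 * α n * c := by
    have hX := frobenius_norm_centeringMatrix_mul_of_update_le hσ0.le (hα_nonneg n) hR hC W
      hWrow hWcol hWcontract A11 A12 hA11 hA12 _ _ _ _ _ _ hb1 (hξ n) (hxrec n)
    have hY := frobenius_norm_centeringMatrix_mul_of_update_le hσ0.le (hβ_nonneg n) hR hC V
      hVrow hVcol hVcontract A21 A22 hA21 hA22 _ _ _ _ _ _ hb2 (hψ n) (hyrec n)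
    have hβα_n := mul_le_mul_of_nonneg_right (hβ_le n) (by positivity : 0 ≤ z n + c)
    simp only [z] at hX hY hβα_n ⊢
    linarith
  rw [hXhat, hYhat, hxbar, hybar, fnorm_sub_mean_eq, fnorm_sub_mean_eq]
  exact le_of_le_stepsize_recursion (fun n => by positivity) hz0 (by positivity)
    (hβ0.le.trans hβα) hα hσ0.le hσα hδσ hδ1 hKpos hKstar hk hstep |>.trans_eq (by ring)

/-- Under the distributed two-time-scale setup with `δ ∈ (σ,1)`, `σ + 2α0 ≤ 1`,
and `K*` a positive integer with `K* ≥ (2α0/(δ−σ))^(3/2)`: for every `k ≥ K*`,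
`‖X̂_k‖ + ‖Ŷ_k‖ ≤ 2√N(R+C)α0(3 + 1/(1−δ))(K*)^(1/3)`. -/
theorem stmt_9
    {N d : ℕ} (hN : 0 < N) (hd : 0 < d) (R C : ℝ) (hR : 0 ≤ R) (hC : 0 ≤ C)
    (W V : Matrix (Fin N) (Fin N) ℝ)
    (hWnonneg : ∀ i j, 0 ≤ W i j) (hWrow : ∀ i, ∑ j, W i j = 1)
    (hWcol : ∀ j, ∑ i, W i j = 1)
    (hVnonneg : ∀ i j, 0 ≤ V i j) (hVrow : ∀ i, ∑ j, V i j = 1)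
    (hVcol : ∀ j, ∑ i, V i j = 1)
    (σ : ℝ) (hσ0 : 0 < σ) (hσ1 : σ < 1)
    (hWcontract : ∀ v : Fin N → ℝ, (∑ i, v i = 0) → eucEnorm (W.mulVec v) ≤ σ * eucEnorm v)
    (hVcontract : ∀ v : Fin N → ℝ, (∑ i, v i = 0) → eucEnorm (V.mulVec v) ≤ σ * eucEnorm v)
    (A11 A12 A21 A22 : Matrix (Fin d) (Fin d) ℝ)
    (hA11 : ∀ v, eucEnorm (A11.mulVec v) ≤ eucEnorm v)
    (hA12 : ∀ v, eucEnorm (A12.mulVec v) ≤ eucEnorm v)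
    (hA21 : ∀ v, eucEnorm (A21.mulVec v) ≤ eucEnorm v)
    (hA22 : ∀ v, eucEnorm (A22.mulVec v) ≤ eucEnorm v)
    (b1 b2 : Fin N → Fin d → ℝ)
    (hb1 : ∀ i, eucEnorm (b1 i) ≤ R) (hb2 : ∀ i, eucEnorm (b2 i) ≤ R)
    (ξ ψ : ℕ → Fin N → Fin d → ℝ)
    (hξ : ∀ k i, eucEnorm (ξ k i) ≤ C) (hψ : ∀ k i, eucEnorm (ψ k i) ≤ C)
    (α0 β0 : ℝ) (hβ0 : 0 < β0) (hβα : β0 ≤ α0)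
    (α β : ℕ → ℝ)
    (hα : ∀ k, α k = α0 / ((k : ℝ) + 1) ^ ((2 : ℝ) / 3))
    (hβ : ∀ k, β k = β0 / ((k : ℝ) + 1))
    (x y : ℕ → Fin N → Fin d → ℝ)
    (hx0 : ∀ i, x 0 i = 0) (hy0 : ∀ i, y 0 i = 0)
    (hxrec : ∀ k i, x (k + 1) i =
      (∑ j, W i j • x k j) -
        α k • (A11.mulVec (x k i) + A12.mulVec (y k i) - b1 i + ξ k i))
    (hyrec : ∀ k i, y (k + 1) i =
      (∑ j, V i j • y k j) -
        β k • (A21.mulVec (x k i) + A22.mulVec (y k i) - b2 i + ψ k i))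
    (xbar ybar : ℕ → Fin d → ℝ)
    (hxbar : ∀ k, xbar k = (1 / (N : ℝ)) • ∑ i, x k i)
    (hybar : ∀ k, ybar k = (1 / (N : ℝ)) • ∑ i, y k i)
    (Xhat Yhat : ℕ → Matrix (Fin N) (Fin d) ℝ)
    (hXhat : ∀ k, Xhat k = Matrix.of fun i j => x k i j - xbar k j)
    (hYhat : ∀ k, Yhat k = Matrix.of fun i j => y k i j - ybar k j)
    (δ : ℝ) (hδσ : σ < δ) (hδ1 : δ < 1) (hσα : σ + 2 * α0 ≤ 1)
    (Kstar : ℕ) (hKpos : 1 ≤ Kstar)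
    (hKstar : (2 * α0 / (δ - σ)) ^ ((3 : ℝ) / 2) ≤ (Kstar : ℝ))
    (k : ℕ) (hk : Kstar ≤ k) :
    fnorm (Xhat k) + fnorm (Yhat k) ≤
      2 * Real.sqrt N * (R + C) * α0 * (3 + 1 / (1 - δ)) * (Kstar : ℝ) ^ ((1 : ℝ) / 3) :=
  stmt_9_general R C hR hC W V hWrow hWcol hVrow hVcol σ hσ0 hWcontract hVcontract A11 A12 A21 A22
    hA11 hA12 hA21 hA22 b1 b2 hb1 hb2 ξ ψ hξ hψ α0 β0 hβ0 hβα α β hα hβ x y hx0 hy0 hxrec hyrec xbar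
    ybar hxbar hybar Xhat Yhat hXhat hYhat δ hδσ hδ1 hσα Kstar hKpos hKstar k hk
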